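/- arXiv:1306.3618 — 7 statements merged into one kernel-verified Lean document; each statement's English description precedes it below -/
import Mathlib

section
/- (Proposition 6, monotonicity of h^K_k) Let K ≥ 1 and 0 ≤ k ≤ K-1. Suppose (P_F, P_M) and (P_F', P_M') are two pairs in [0,1]² satisfying the robustness condition B(k; K, P_F) + B(k; K, 1-P_M) = 1 and B(k; K, P_F') + B(k; K, 1-P_M') = 1. If P_F < P_F', then P_M < P_M'. In other words, the function h^K_k implicitly defined by the robustness condition, mapping P_F to the corresponding P_M, is strictly monotonically increasing. -/
/-!
`B(k; K, ·)` is the sum of the first `k + 1` Bernstein polynomials of degree `K`. Their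
derivatives telescope to `-K b_{K-1,k}`, which is negative on `(0, 1)` when `k < K`, so
`B(k; K, ·)` is strictly decreasing on `[0, 1]`. In the robustness condition a larger `P_F`
lowers `B(k; K, P_F)`, hence raises `B(k; K, 1 - P_M)`, which forces `1 - P_M` down.
-/

/-- Binomial cumulative distribution function: probability of at most `k` successes out of
`K` trials, each with success probability `p`. -/
noncomputable def binCdf (K k : ℕ) (p : ℝ) : ℝ :=
  ∑ i ∈ Finset.range (k + 1), (K.choose i : ℝ) * p ^ i * (1 - p) ^ (K - i)

open Polynomial

theorem derivative_sum_range_bernsteinPolynomial {R : Type*} [CommRing R] (n k : ℕ) :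
    derivative (∑ i ∈ Finset.range (k + 1), bernsteinPolynomial R n i) =
      -(n : R[X]) * bernsteinPolynomial R (n - 1) k := by
  induction k with
  | zero => simp [bernsteinPolynomial.derivative_zero]
  | succ k ih =>
    rw [Finset.sum_range_succ, derivative_add, ih, bernsteinPolynomial.derivative_succ]
    ring

theorem bernsteinPolynomial_eval_pos {n ν : ℕ} (h : ν ≤ n) {x : ℝ} (hx : x ∈ Set.Ioo 0 1) :
    0 < (bernsteinPolynomial ℝ n ν).eval x := by
  have hchoose : (0 : ℝ) < n.choose ν := by exact_mod_cast Nat.choose_pos h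
  have hx₀ : 0 < x := hx.1
  have hx₁ : 0 < 1 - x := sub_pos.mpr hx.2
  simp only [bernsteinPolynomial, eval_mul, eval_pow, eval_sub, eval_one, eval_X, eval_natCast]
  positivity

theorem binCdf_eq_eval_sum_bernsteinPolynomial (K k : ℕ) (p : ℝ) :
    binCdf K k p = (∑ i ∈ Finset.range (k + 1), bernsteinPolynomial ℝ K i).eval p := by
  simp [binCdf, bernsteinPolynomial, eval_finsetSum]

theorem binCdf_strictAntiOn {K k : ℕ} (hk : k < K) :
    StrictAntiOn (binCdf K k) (Set.Icc 0 1) := by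
  set P := ∑ i ∈ Finset.range (k + 1), bernsteinPolynomial ℝ K i
  have hP : binCdf K k = fun p => P.eval p := funext (binCdf_eq_eval_sum_bernsteinPolynomial K k)
  rw [hP]
  refine strictAntiOn_of_deriv_neg (convex_Icc 0 1) P.continuousOn fun x hx => ?_
  rw [interior_Icc] at hx
  have hB := bernsteinPolynomial_eval_pos (n := K - 1) (ν := k) (by omega) hx
  have hK : (0 : ℝ) < K := by exact_mod_cast (k.zero_le.trans_lt hk)
  rw [Polynomial.deriv, derivative_sum_range_bernsteinPolynomial]
  simp only [eval_mul, eval_neg, eval_natCast, neg_mul, neg_lt_zero]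
  exact mul_pos hK hB

/-- Proposition 6, monotonicity of `h^K_k`: if two pairs `(P_F, P_M)` and
`(P_F', P_M')` in `[0,1]²` satisfy the robustness condition
`B(k; K, P_F) + B(k; K, 1-P_M) = 1`, then `P_F < P_F'` implies `P_M < P_M'`. -/
theorem fusion_curve_strictMono (K k : ℕ) (hK : 1 ≤ K) (hk : k ≤ K - 1)
    (PF PM PF' PM' : ℝ)
    (hPF : PF ∈ Set.Icc (0:ℝ) 1) (hPM : PM ∈ Set.Icc (0:ℝ) 1)
    (hPF' : PF' ∈ Set.Icc (0:ℝ) 1) (hPM' : PM' ∈ Set.Icc (0:ℝ) 1)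
    (h1 : binCdf K k PF + binCdf K k (1 - PM) = 1)
    (h2 : binCdf K k PF' + binCdf K k (1 - PM') = 1)
    (hlt : PF < PF') : PM < PM' := by
  have hB := binCdf_strictAntiOn (show k < K by omega)
  have hF : binCdf K k PF' < binCdf K k PF := hB hPF hPF' hlt
  have hM : binCdf K k (1 - PM) < binCdf K k (1 - PM') := by linarith
  linarith [(hB.lt_iff_gt (Set.Icc.mem_iff_one_sub_mem.mp hPM)
    (Set.Icc.mem_iff_one_sub_mem.mp hPM')).mp hM]
end

section
/- (Proposition 6, position relative to the diagonal) Let K = 2n+1 be odd and let P_F, P_M ∈ (0,1) satisfy the robustness condition B(k; K, P_F) + B(k; K, 1-P_M) = 1. If 0 ≤ k ≤ n-1 then P_M > P_F, and if n+1 ≤ k ≤ K-1 then P_M < P_F. -/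
/-!
Since `B(k; K, 1 - p) = 1 - B(K - 1 - k; K, p)`, the robustness condition for `K = 2n + 1`
says `B(k; K, P_F) = B(2n - k; K, P_M)`. The cdf is strictly increasing in the threshold, so
for `k < n` this exceeds `B(k; K, P_M)`, and for `k > n` it falls short of it. As `B(k; K, ·)`
is antitone in the success probability (its derivative is `-K C(K-1, k) p^k (1-p)^(K-1-k)`),
this places `P_F` below, respectively above, `P_M`.
-/

namespace binCdf

open Finset

/-- The derivatives of the binomial terms telescope through these quantities. -/
noncomputable def derivTerm (K i : ℕ) (p : ℝ) : ℝ :=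
  (i : ℝ) * (K.choose i : ℝ) * p ^ (i - 1) * (1 - p) ^ (K - i)

lemma hasDerivAt_binomial_term (K i : ℕ) (p : ℝ) :
    HasDerivAt (fun q : ℝ => (K.choose i : ℝ) * q ^ i * (1 - q) ^ (K - i))
      (derivTerm K i p - derivTerm K (i + 1) p) p := by
  have hpow : HasDerivAt (fun q : ℝ => (K.choose i : ℝ) * q ^ i)
      ((K.choose i : ℝ) * ((i : ℝ) * p ^ (i - 1))) p :=
    (hasDerivAt_pow i p).const_mul _
  have hcompl : HasDerivAt (fun q : ℝ => (1 - q) ^ (K - i))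
      (((K - i : ℕ) : ℝ) * (1 - p) ^ (K - i - 1) * (-1)) p :=
    (hasDerivAt_pow (K - i) (1 - p)).comp p ((hasDerivAt_id p).const_sub 1)
  refine (hpow.fun_mul hcompl).congr_deriv ?_
  have hchoose : ((i + 1 : ℕ) : ℝ) * (K.choose (i + 1) : ℝ)
      = (K.choose i : ℝ) * ((K - i : ℕ) : ℝ) := by
    rw [← Nat.cast_mul, ← Nat.cast_mul, mul_comm (i + 1), Nat.choose_succ_right_eq]
  simp only [derivTerm, Nat.add_sub_cancel, Nat.sub_sub]
  rw [mul_assoc ((i + 1 : ℕ) : ℝ), mul_assoc, ← mul_assoc ((i + 1 : ℕ) : ℝ), hchoose]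
  ring

lemma hasDerivAt (K k : ℕ) (p : ℝ) :
    HasDerivAt (binCdf K k) (-derivTerm K (k + 1) p) p := by
  have hsum : HasDerivAt (binCdf K k)
      (∑ i ∈ range (k + 1), (derivTerm K i p - derivTerm K (i + 1) p)) p :=
    HasDerivAt.fun_sum fun i _ => hasDerivAt_binomial_term K i p
  rwa [sum_range_sub' (fun i => derivTerm K i p), derivTerm, Nat.cast_zero, zero_mul,
    zero_mul, zero_mul, zero_sub] at hsum

lemma derivTerm_nonneg (K i : ℕ) {p : ℝ} (hp : p ∈ Set.Icc (0 : ℝ) 1) :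
    0 ≤ derivTerm K i p := by
  have hq : 0 ≤ 1 - p := sub_nonneg.2 hp.2
  have hp₀ := hp.1
  unfold derivTerm
  positivity

lemma antitoneOn (K k : ℕ) : AntitoneOn (binCdf K k) (Set.Icc 0 1) := by
  refine antitoneOn_of_deriv_nonpos (convex_Icc 0 1)
    (fun p _ => (hasDerivAt K k p).continuousAt.continuousWithinAt)
    (fun p _ => (hasDerivAt K k p).differentiableAt.differentiableWithinAt) fun p hp => ?_
  rw [(hasDerivAt K k p).deriv, neg_nonpos]
  exact derivTerm_nonneg K (k + 1) (interior_subset hp)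

lemma lt_of_threshold_lt {K j m : ℕ} (hjm : j < m) (hm : m ≤ K) {p : ℝ}
    (hp : p ∈ Set.Ioo (0 : ℝ) 1) : binCdf K j p < binCdf K m p := by
  have hq : 0 < 1 - p := sub_pos.2 hp.2
  refine sum_lt_sum_of_subset (range_subset_range.2 (by omega)) (i := m)
    (mem_range.2 (by omega)) (by rw [mem_range]; omega) ?_ fun i _ _ => ?_
  · have := Nat.choose_pos hm
    have := hp.1
    positivity
  · have := hp.1.le
    positivity

lemma self (K : ℕ) (p : ℝ) : binCdf K K p = 1 := by
  have hbinom := add_pow p (1 - p) K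
  rw [add_sub_cancel, one_pow] at hbinom
  exact (sum_congr rfl fun i _ => by ring).trans hbinom.symm

lemma one_sub {K k : ℕ} (hk : k < K) (p : ℝ) :
    binCdf K k (1 - p) = 1 - binCdf K (K - 1 - k) p := by
  set t : ℕ → ℝ := fun i => (K.choose i : ℝ) * p ^ i * (1 - p) ^ (K - i)
  have hreflect : binCdf K k (1 - p) = ∑ i ∈ range (k + 1), t (K - i) :=
    sum_congr rfl fun i hi => by
      have hi : i ≤ K := by rw [mem_range] at hi; omega
      simp only [t, Nat.choose_symm hi, Nat.sub_sub_self hi, sub_sub_cancel]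
      ring
  rw [eq_sub_iff_add_eq, hreflect, range_eq_Ico, sum_Ico_reflect t 0 (by omega), ← self K p,
    binCdf, show K + 1 - (k + 1) = K - 1 - k + 1 by omega, add_comm]
  exact sum_range_add_sum_Ico t (by omega)

end binCdf

/-- Proposition 6, position relative to the diagonal: for odd `K = 2n+1`
and `P_F, P_M ∈ (0,1)` satisfying `B(k; K, P_F) + B(k; K, 1-P_M) = 1`: if `k ≤ n-1`
then `P_M > P_F`, and if `n+1 ≤ k ≤ K-1` then `P_M < P_F`. -/
theorem fusion_curve_vs_diagonal (n k : ℕ) (PF PM : ℝ)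
    (hPF : PF ∈ Set.Ioo (0:ℝ) 1) (hPM : PM ∈ Set.Ioo (0:ℝ) 1)
    (h : binCdf (2 * n + 1) k PF + binCdf (2 * n + 1) k (1 - PM) = 1) :
    (k + 1 ≤ n → PF < PM) ∧ (n + 1 ≤ k → k + 1 ≤ 2 * n + 1 → PM < PF) := by
  have hcross (hk : k < 2 * n + 1) :
      binCdf (2 * n + 1) k PF = binCdf (2 * n + 1) (2 * n - k) PM := by
    rw [binCdf.one_sub hk, show 2 * n + 1 - 1 - k = 2 * n - k by omega] at h
    linarith
  have hanti := binCdf.antitoneOn (2 * n + 1) k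
  have hPF' := Set.Ioo_subset_Icc_self hPF
  have hPM' := Set.Ioo_subset_Icc_self hPM
  refine ⟨fun hkn => hanti.reflect_lt hPM' hPF' ?_,
    fun hnk hkK => hanti.reflect_lt hPF' hPM' ?_⟩
  · rw [hcross (by omega)]
    exact binCdf.lt_of_threshold_lt (by omega) (by omega) hPM
  · rw [hcross (by omega)]
    exact binCdf.lt_of_threshold_lt (by omega) (by omega) hPM
end

section
/- (Theorem 1, strict suboptimality of intermediate thresholds) Let K = 2n+1 be odd, let 1 ≤ k ≤ n, let θ̂ ∈ (0,1) and let x ∈ (0,1). Define f₁(x) = 1 + ∑_{i=1}^{k} C(K,i) ((1 - xθ̂)/(xθ̂))^i and f₂(x) = 1 + ∑_{i=1}^{k} C(K,i) ((1 - x)/x)^i. If x^K = 1/(θ̂^K f₁(x) + f₂(x)), then f₁(x) > f₂(x) and consequently θ̂^K x^K f₁(x) > θ̂^K/(1 + θ̂^K); that is, the fused error probability at the intersection of the threshold-k robust fusion curve with the line l₁ is strictly larger than the fused error probability θ̂^K/(1+θ̂^K) achieved with threshold k = 0. -/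
/-- Theorem 1, strict suboptimality of intermediate thresholds: for odd
`K = 2n+1`, `1 ≤ k ≤ n`, `θ̂ ∈ (0,1)`, `x ∈ (0,1)`, with
`f₁(x) = 1 + ∑_{i=1}^{k} C(K,i) ((1-xθ̂)/(xθ̂))^i`,
`f₂(x) = 1 + ∑_{i=1}^{k} C(K,i) ((1-x)/x)^i`, if `x^K = 1/(θ̂^K f₁(x) + f₂(x))` then
`f₁(x) > f₂(x)` and `θ̂^K x^K f₁(x) > θ̂^K/(1+θ̂^K)`. -/
theorem intermediate_threshold_suboptimal (n k : ℕ) (hk1 : 1 ≤ k) (hkn : k ≤ n)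
    (θh x : ℝ) (hθ : θh ∈ Set.Ioo (0:ℝ) 1) (hx : x ∈ Set.Ioo (0:ℝ) 1)
    (f₁ f₂ : ℝ)
    (hf₁ : f₁ = 1 + ∑ i ∈ Finset.Icc 1 k,
        ((2 * n + 1).choose i : ℝ) * ((1 - x * θh) / (x * θh)) ^ i)
    (hf₂ : f₂ = 1 + ∑ i ∈ Finset.Icc 1 k,
        ((2 * n + 1).choose i : ℝ) * ((1 - x) / x) ^ i)
    (hx_eq : x ^ (2 * n + 1) = 1 / (θh ^ (2 * n + 1) * f₁ + f₂)) :
    f₂ < f₁ ∧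
    θh ^ (2 * n + 1) / (1 + θh ^ (2 * n + 1)) < θh ^ (2 * n + 1) * x ^ (2 * n + 1) * f₁ := by
  obtain ⟨hθ0, hθ1⟩ := hθ
  obtain ⟨hx0, hx1⟩ := hx
  have hxθ0 : 0 < x * θh := mul_pos hx0 hθ0
  have hxθx : x * θh < x := by nlinarith
  have hr2pos : 0 < (1 - x) / x := div_pos (by linarith) hx0
  have hr : (1 - x) / x < (1 - x * θh) / (x * θh) := by
    rw [div_lt_div_iff₀ hx0 hxθ0]
    nlinarith
  have hchoose : ∀ i ∈ Finset.Icc 1 k, 0 < (((2 * n + 1).choose i : ℝ)) := by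
    intro i hi
    simp only [Finset.mem_Icc] at hi
    have : i ≤ 2 * n + 1 := by omega
    exact_mod_cast Nat.choose_pos this
  have hsumlt : ∑ i ∈ Finset.Icc 1 k, ((2 * n + 1).choose i : ℝ) * ((1 - x) / x) ^ i
      < ∑ i ∈ Finset.Icc 1 k, ((2 * n + 1).choose i : ℝ) * ((1 - x * θh) / (x * θh)) ^ i := by
    apply Finset.sum_lt_sum_of_nonempty
    · exact ⟨1, Finset.mem_Icc.mpr ⟨le_refl 1, hk1⟩⟩
    · intro i hi
      have hi' := Finset.mem_Icc.mp hi
      have hpow : ((1 - x) / x) ^ i < ((1 - x * θh) / (x * θh)) ^ i :=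
        pow_lt_pow_left₀ hr hr2pos.le (by omega)
      exact mul_lt_mul_of_pos_left hpow (hchoose i hi)
  have hflt : f₂ < f₁ := by rw [hf₁, hf₂]; linarith
  have hf₂1 : 1 ≤ f₂ := by
    rw [hf₂]
    have : 0 ≤ ∑ i ∈ Finset.Icc 1 k, ((2 * n + 1).choose i : ℝ) * ((1 - x) / x) ^ i :=
      Finset.sum_nonneg fun i hi => mul_nonneg (hchoose i hi).le (pow_nonneg hr2pos.le i)
    linarith
  have hf₁pos : 0 < f₁ := by linarith
  have hθK : 0 < θh ^ (2 * n + 1) := pow_pos hθ0 _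
  have hS : 0 < θh ^ (2 * n + 1) * f₁ + f₂ := by positivity
  refine ⟨hflt, ?_⟩
  rw [hx_eq]
  rw [div_lt_iff₀ (by positivity)]
  have h1 : θh ^ (2 * n + 1) * (1 / (θh ^ (2 * n + 1) * f₁ + f₂)) * f₁
      = θh ^ (2 * n + 1) * f₁ / (θh ^ (2 * n + 1) * f₁ + f₂) := by ring
  rw [h1, div_mul_eq_mul_div, lt_div_iff₀ hS]
  nlinarith [mul_lt_mul_of_pos_left hflt hθK]
end

section
/- (Theorem 1, bound on the loss) Let K = 2n+1 be odd and θ ∈ (0,1/2], and set θ̂ = θ/(1-θ). Then the binomial tail satisfies T(K, n+1, θ) = ∑_{i=n+1}^{K} C(K,i) θ^i (1-θ)^{K-i} ≤ 1/2, and consequently the performance loss L^K(θ) = T(K, n+1, θ) - θ̂^K/(1 + θ̂^K) is strictly less than 1/2. -/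
/-! Pairing the term of index `i` with that of index `K - i` shows that, when `θ ≤ 1 - θ`,
the upper half of the binomial expansion of `(θ + (1 - θ)) ^ K`, `K = 2n+1`, is dominated by the
lower half; the two halves sum to `1`, so the upper one is at most `1/2`. The subtracted term
`θ̂^K/(1+θ̂^K)` is positive, which makes the loss strictly smaller. -/

open Finset

lemma pow_mul_pow_le_pow_mul_pow {p q : ℝ} (hp : 0 ≤ p) (hpq : p ≤ q) {i j : ℕ}
    (hji : j ≤ i) :
    p ^ i * q ^ j ≤ p ^ j * q ^ i := by
  obtain ⟨k, rfl⟩ := Nat.exists_eq_add_of_le hji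
  have hq : 0 ≤ q := hp.trans hpq
  calc p ^ (j + k) * q ^ j = p ^ j * q ^ j * p ^ k := by ring
    _ ≤ p ^ j * q ^ j * q ^ k := by gcongr
    _ = p ^ j * q ^ (j + k) := by ring

lemma sum_Icc_choose_le_sum_range_choose {p q : ℝ} (hp : 0 ≤ p) (hpq : p ≤ q) (n : ℕ) :
    ∑ i ∈ Icc (n + 1) (2 * n + 1), ((2 * n + 1).choose i : ℝ) * p ^ i * q ^ (2 * n + 1 - i)
      ≤ ∑ i ∈ range (n + 1), ((2 * n + 1).choose i : ℝ) * p ^ i * q ^ (2 * n + 1 - i) := by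
  set K := 2 * n + 1
  calc ∑ i ∈ Icc (n + 1) K, (K.choose i : ℝ) * p ^ i * q ^ (K - i)
      ≤ ∑ i ∈ Icc (n + 1) K, (K.choose (K - i) : ℝ) * p ^ (K - i) * q ^ (K - (K - i)) := by
        refine sum_le_sum fun i hi => ?_
        obtain ⟨hni, hiK⟩ := mem_Icc.mp hi
        rw [Nat.choose_symm hiK, Nat.sub_sub_self hiK, mul_assoc, mul_assoc]
        exact mul_le_mul_of_nonneg_left
          (pow_mul_pow_le_pow_mul_pow hp hpq (by omega)) (by positivity)
    _ = ∑ i ∈ range (n + 1), (K.choose i : ℝ) * p ^ i * q ^ (K - i) := by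
        refine sum_nbij' (K - ·) (K - ·) ?_ ?_ ?_ ?_ fun _ _ => rfl <;>
          intro i hi <;> simp only [mem_Icc, mem_range] at hi ⊢ <;> omega

lemma sum_range_add_sum_Icc_choose (p q : ℝ) (n : ℕ) :
    ∑ i ∈ range (n + 1), ((2 * n + 1).choose i : ℝ) * p ^ i * q ^ (2 * n + 1 - i) +
      ∑ i ∈ Icc (n + 1) (2 * n + 1), ((2 * n + 1).choose i : ℝ) * p ^ i * q ^ (2 * n + 1 - i)
      = (p + q) ^ (2 * n + 1) := by
  rw [add_pow, ← Ico_add_one_right_eq_Icc, sum_range_add_sum_Ico _ (by omega)]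
  exact sum_congr rfl fun i _ => by ring

lemma binomial_upper_tail_le_half {θ : ℝ} (hθ0 : 0 ≤ θ) (hθ : θ ≤ 1 / 2) (n : ℕ) :
    ∑ i ∈ Icc (n + 1) (2 * n + 1),
        ((2 * n + 1).choose i : ℝ) * θ ^ i * (1 - θ) ^ (2 * n + 1 - i) ≤ 1 / 2 := by
  have hle := sum_Icc_choose_le_sum_range_choose hθ0 (show θ ≤ 1 - θ by linarith) n
  have htotal := sum_range_add_sum_Icc_choose θ (1 - θ) n
  rw [add_sub_cancel, one_pow] at htotal
  linarith

/-- Theorem 1, bound on the loss: for odd `K = 2n+1`, `θ ∈ (0,1/2]` and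
`θ̂ = θ/(1-θ)`, the binomial tail `T(K, n+1, θ)` is at most `1/2`, and the performance
loss `L^K(θ) = T(K, n+1, θ) - θ̂^K/(1+θ̂^K)` is strictly less than `1/2`. -/
theorem loss_lt_half (n : ℕ) (θ : ℝ) (hθ : θ ∈ Set.Ioc (0:ℝ) (1/2)) :
    (∑ i ∈ Finset.Icc (n + 1) (2 * n + 1),
        ((2 * n + 1).choose i : ℝ) * θ ^ i * (1 - θ) ^ (2 * n + 1 - i)) ≤ 1 / 2 ∧
    (∑ i ∈ Finset.Icc (n + 1) (2 * n + 1),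
        ((2 * n + 1).choose i : ℝ) * θ ^ i * (1 - θ) ^ (2 * n + 1 - i)) -
      (θ / (1 - θ)) ^ (2 * n + 1) / (1 + (θ / (1 - θ)) ^ (2 * n + 1)) < 1 / 2 := by
  obtain ⟨hθ0, hθ⟩ := hθ
  have htail := binomial_upper_tail_le_half hθ0.le hθ n
  have hratio : 0 < (θ / (1 - θ)) ^ (2 * n + 1) := pow_pos (div_pos hθ0 (by linarith)) _
  have hloss : 0 < (θ / (1 - θ)) ^ (2 * n + 1) / (1 + (θ / (1 - θ)) ^ (2 * n + 1)) := by
    positivity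
  exact ⟨htail, by linarith⟩
end

section
/- (Single sensor maximum loss, Equation (18)) Let θ ∈ [0,1/2] and θ̂ = θ/(1-θ). For every point (x,y) of the butterfly region B_θ one has (x+y)/2 ≥ θ/(2(1-θ)), and this bound is attained at the point (0, θ̂) ∈ B_θ. Consequently, the supremum over B_θ of the loss θ - (x+y)/2 equals θ(1-2θ)/(2(1-θ)). -/
/-- The butterfly region `B_θ`: points of `[0,1]²` lying weakly between the lines
`l₁ : y = θ̂(1-x)` and `l₂ : x = θ̂(1-y)`, where `θ̂ = θ/(1-θ)`. -/
def butterfly (θ : ℝ) : Set (ℝ × ℝ) :=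
  {p | p.1 ∈ Set.Icc (0:ℝ) 1 ∧ p.2 ∈ Set.Icc (0:ℝ) 1 ∧
    ((θ / (1 - θ) * (1 - p.1) ≤ p.2 ∧ p.1 ≤ θ / (1 - θ) * (1 - p.2)) ∨
     (p.2 ≤ θ / (1 - θ) * (1 - p.1) ∧ θ / (1 - θ) * (1 - p.2) ≤ p.1))}

/-- single sensor maximum loss, Equation (18): for `θ ∈ [0,1/2]` and
`θ̂ = θ/(1-θ)`, every point `(x,y)` of `B_θ` satisfies `(x+y)/2 ≥ θ/(2(1-θ))`, the bound
is attained at `(0, θ̂) ∈ B_θ`, and consequently the supremum over `B_θ` of the loss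
`θ - (x+y)/2` equals `θ(1-2θ)/(2(1-θ))`. -/
theorem single_sensor_max_loss (θ : ℝ) (hθ : θ ∈ Set.Icc (0:ℝ) (1/2)) :
    (∀ p ∈ butterfly θ, θ / (2 * (1 - θ)) ≤ (p.1 + p.2) / 2) ∧
    ((0:ℝ), θ / (1 - θ)) ∈ butterfly θ ∧
    ((0:ℝ) + θ / (1 - θ)) / 2 = θ / (2 * (1 - θ)) ∧
    sSup ((fun p : ℝ × ℝ => θ - (p.1 + p.2) / 2) '' butterfly θ) =
      θ * (1 - 2 * θ) / (2 * (1 - θ)) := by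
  obtain ⟨h0, h2⟩ := hθ
  have h1 : (0:ℝ) < 1 - θ := by linarith
  have hhat0 : 0 ≤ θ / (1 - θ) := div_nonneg h0 h1.le
  have hhat1 : θ / (1 - θ) ≤ 1 := by
    rw [div_le_one h1]; linarith
  have key : ∀ p ∈ butterfly θ, θ / (2 * (1 - θ)) ≤ (p.1 + p.2) / 2 := by
    rintro ⟨x, y⟩ ⟨⟨hx0, hx1⟩, ⟨hy0, hy1⟩, hb⟩
    have hgoal : θ / (1 - θ) ≤ x + y := by
      rcases hb with ⟨h, _⟩ | ⟨_, h⟩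
      · have : θ / (1 - θ) * x ≤ x := by nlinarith
        nlinarith
      · have : θ / (1 - θ) * y ≤ y := by nlinarith
        nlinarith
    have : θ / (2 * (1 - θ)) = (θ / (1 - θ)) / 2 := by
      rw [div_div]; ring_nf
    rw [this]; linarith
  have hmem : ((0:ℝ), θ / (1 - θ)) ∈ butterfly θ := by
    refine ⟨⟨le_refl 0, zero_le_one⟩, ⟨hhat0, hhat1⟩, Or.inl ⟨?_, ?_⟩⟩
    · simp only [sub_zero, mul_one]; exact le_refl _
    · nlinarith
  have heq : ((0:ℝ) + θ / (1 - θ)) / 2 = θ / (2 * (1 - θ)) := by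
    rw [zero_add, div_div]; ring_nf
  refine ⟨key, hmem, heq, ?_⟩
  have hval : θ - ((0:ℝ) + θ / (1 - θ)) / 2 = θ * (1 - 2 * θ) / (2 * (1 - θ)) := by
    field_simp; ring
  apply IsGreatest.csSup_eq
  constructor
  · exact ⟨_, hmem, hval⟩
  · rintro v ⟨p, hp, rfl⟩
    have := key p hp
    rw [← hval]
    simp only
    linarith [heq]
end

section
/- (Area of the butterfly region) For every θ ∈ (0,1/2), the two-dimensional Lebesgue measure of the butterfly region B_θ equals θ(1-2θ)/(1-θ). -/
open MeasureTheory Set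

theorem volume_region_between_cc_eq_lintegral {α : Type*} [MeasurableSpace α] {μ : Measure α}
    [SFinite μ] {f g : α → ℝ} {s : Set α} (hf : Measurable f) (hg : Measurable g)
    (hs : MeasurableSet s) :
    μ.prod volume {p : α × ℝ | p.1 ∈ s ∧ p.2 ∈ Icc (f p.1) (g p.1)} =
      ∫⁻ x in s, ENNReal.ofReal (g x - f x) ∂μ := by
  rw [Measure.prod_apply (measurableSet_region_between_cc hf hg hs), ← lintegral_indicator hs]
  congr 1 with x
  by_cases hx : x ∈ s
  · rw [indicator_of_mem hx, ← Real.volume_Icc]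
    congr 1 with y
    simp [hx]
  · simp [hx]

-- For `t = θ̂`, the triangle of `B_θ` with vertices `(0, θ̂)`, `(0, 1)` and `(θ, θ)`.
def wing (t : ℝ) : Set (ℝ × ℝ) :=
  {p | p.1 ∈ Icc 0 1 ∧ p.2 ∈ Icc 0 1 ∧ t * (1 - p.1) ≤ p.2 ∧ p.1 ≤ t * (1 - p.2)}

theorem butterfly_eq_wing_union_preimage_swap (θ : ℝ) :
    butterfly θ = wing (θ / (1 - θ)) ∪ Prod.swap ⁻¹' wing (θ / (1 - θ)) := by
  ext ⟨x, y⟩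
  simp only [butterfly, wing, mem_union, mem_preimage, mem_ofPred_eq, Prod.swap_prod_mk]
  tauto

section Wing

variable {t : ℝ}

theorem measurableSet_wing (t : ℝ) : MeasurableSet (wing t) := by
  unfold wing
  simp only [mem_Icc]
  measurability

theorem wing_inter_preimage_swap_subset (ht : t ≠ 1) :
    wing t ∩ Prod.swap ⁻¹' wing t ⊆ {(t / (1 + t), t / (1 + t))} := by
  rintro ⟨x, y⟩ ⟨⟨-, -, hyx, hxy⟩, -, -, hxy', hyx'⟩
  replace hxy : x = t * (1 - y) := le_antisymm hxy hxy'
  replace hyx : y = t * (1 - x) := le_antisymm hyx' hyx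
  have hx : x * (1 + t) = t := mul_left_cancel₀ (sub_ne_zero.2 ht.symm) <| by
    linear_combination hxy - t * hyx
  have hy : y * (1 + t) = t := mul_left_cancel₀ (sub_ne_zero.2 ht.symm) <| by
    linear_combination hyx - t * hxy
  have ht' : 1 + t ≠ 0 := fun h => one_ne_zero (by linear_combination h + hx - x * h)
  rw [eq_div_of_mul_eq ht' hx, eq_div_of_mul_eq ht' hy, mem_singleton_iff]

theorem wing_eq_region_between_cc (ht0 : 0 < t) (ht1 : t < 1) :
    wing t = {p | p.1 ∈ Icc 0 (t / (1 + t)) ∧ p.2 ∈ Icc (t * (1 - p.1)) (1 - p.1 / t)} := by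
  ext ⟨x, y⟩
  have hupper : y ≤ 1 - x / t ↔ x ≤ t * (1 - y) := by rw [le_sub_comm, div_le_iff₀' ht0]
  simp only [wing, mem_ofPred_eq, mem_Icc, le_div_iff₀ (by linarith : (0:ℝ) < 1 + t), hupper]
  constructor
  · rintro ⟨⟨hx0, -⟩, -, hy, hx⟩
    refine ⟨⟨hx0, ?_⟩, hy, by linarith⟩
    nlinarith
  · rintro ⟨⟨hx0, hxc⟩, hy, hx⟩
    refine ⟨⟨hx0, by nlinarith⟩, ⟨by nlinarith, by nlinarith⟩, hy, by linarith⟩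

theorem volume_wing (ht0 : 0 < t) (ht1 : t < 1) :
    volume (wing t) = ENNReal.ofReal ((1 - t) * (t / (1 + t)) / 2) := by
  set c := t / (1 + t)
  have hc : 0 < c := by positivity
  have hwidth : ∀ x, 1 - x / t - t * (1 - x) = (1 - t) * (1 - x / c) := fun x => by
    simp only [c]; field_simp; ring
  rw [wing_eq_region_between_cc ht0 ht1, Measure.volume_eq_prod,
    volume_region_between_cc_eq_lintegral (f := fun x => t * (1 - x)) (g := fun x => 1 - x / t)
      (by fun_prop) (by fun_prop) measurableSet_Icc]
  simp only [hwidth]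
  rw [← ofReal_integral_eq_lintegral_ofReal, integral_Icc_eq_integral_Ioc,
    ← intervalIntegral.integral_of_le hc.le]
  · congr 1
    rw [intervalIntegral.integral_const_mul, intervalIntegral.integral_sub intervalIntegrable_const
      (intervalIntegral.intervalIntegrable_id.div_const c)]
    simp only [intervalIntegral.integral_const, intervalIntegral.integral_div, integral_id,
      smul_eq_mul, sub_zero, mul_one]
    field_simp
    ring
  · exact (by fun_prop : Continuous fun x => (1 - t) * (1 - x / c)).integrableOn_Icc
  · filter_upwards [ae_restrict_mem measurableSet_Icc] with x hx
    exact mul_nonneg (by linarith) (sub_nonneg.2 (div_le_one_of_le₀ hx.2 hc.le))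

end Wing

/-- area of the butterfly region: for `θ ∈ (0,1/2)`, the two-dimensional
Lebesgue measure of `B_θ` equals `θ(1-2θ)/(1-θ)`. -/
theorem butterfly_area (θ : ℝ) (hθ : θ ∈ Set.Ioo (0:ℝ) (1/2)) :
    MeasureTheory.volume (butterfly θ) = ENNReal.ofReal (θ * (1 - 2 * θ) / (1 - θ)) := by
  obtain ⟨hθ0, hθ1⟩ := hθ
  have h1θ : 0 < 1 - θ := by linarith
  have ht0 : 0 < θ / (1 - θ) := div_pos hθ0 h1θ
  have ht1 : θ / (1 - θ) < 1 := by rw [div_lt_one h1θ]; linarith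
  have hnull : volume (wing (θ / (1 - θ)) ∩ Prod.swap ⁻¹' wing (θ / (1 - θ))) = 0 :=
    measure_mono_null (wing_inter_preimage_swap_subset ht1.ne) (measure_singleton _)
  have hswap : MeasurePreserving Prod.swap (volume : Measure (ℝ × ℝ)) volume :=
    Measure.measurePreserving_swap
  have hwing := measurableSet_wing (θ / (1 - θ))
  have harea : 0 ≤ (1 - θ / (1 - θ)) * (θ / (1 - θ) / (1 + θ / (1 - θ))) / 2 := by
    have : 0 ≤ 1 - θ / (1 - θ) := by linarith
    positivity
  rw [butterfly_eq_wing_union_preimage_swap,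
    measure_union₀ (hwing.preimage measurable_swap).nullMeasurableSet hnull,
    hswap.measure_preimage hwing.nullMeasurableSet, volume_wing ht0 ht1,
    ← ENNReal.ofReal_add harea harea]
  congr 1
  field_simp [h1θ.ne']
  ring
end

section
/- (Asymptotics of the multi-sensor loss, Section IV-B) For θ ∈ (0,1/2) set θ̂ = θ/(1-θ) and, for odd K = 2n+1, define L^K_∞(θ) = ∑_{i=n+1}^{K} C(K,i) θ^i (1-θ)^{K-i} - (1/2) ∑_{i=n+1}^{K} C(K,i) θ̂^i (1-θ̂)^{K-i}. Then, as K → ∞ through odd values, L^K_∞(θ) converges to 0 if θ < 1/3 and converges to -1/2 if 1/3 < θ < 1/2. -/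
/-!
`majorityError p n` is the probability that a majority of `2n+1` independent sensors, each in
error with probability `p`, is in error. Every term of the upper binomial tail is at most
`p^(n+1) (1-p)^n` when `p ≤ 1/2`, so the tail is at most `2p (4p(1-p))^n`, which tends to `0` for
`p < 1/2`; the symmetry `p ↔ 1 - p` of the binomial distribution then sends it to `1` for
`p > 1/2`. The robust network has `p = θ < 1/2`, and the other one `p = θ/(1-θ)`, which is below
`1/2` exactly when `θ < 1/3`.
-/

open Finset Filter

noncomputable def majorityError (p : ℝ) (n : ℕ) : ℝ :=
  ∑ i ∈ Icc (n + 1) (2 * n + 1), ((2 * n + 1).choose i : ℝ) * p ^ i * (1 - p) ^ (2 * n + 1 - i)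

lemma majorityError_nonneg {p : ℝ} (hp0 : 0 ≤ p) (hp1 : p ≤ 1) (n : ℕ) :
    0 ≤ majorityError p n := by
  have : 0 ≤ 1 - p := by linarith
  exact sum_nonneg fun i _ => by positivity

lemma pow_mul_one_sub_pow_le_of_le_half {p : ℝ} (hp0 : 0 ≤ p) (hp : p ≤ 1 / 2) {n i : ℕ}
    (hni : n < i) (hi : i ≤ 2 * n + 1) :
    p ^ i * (1 - p) ^ (2 * n + 1 - i) ≤ p ^ (n + 1) * (1 - p) ^ n := by
  obtain ⟨k, rfl⟩ := Nat.exists_eq_add_of_le hni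
  have hrest : 2 * n + 1 - (n + 1 + k) = n - k := by omega
  calc p ^ (n + 1 + k) * (1 - p) ^ (2 * n + 1 - (n + 1 + k))
      = p ^ (n + 1) * (p ^ k * (1 - p) ^ (n - k)) := by rw [hrest, pow_add]; ring
    _ ≤ p ^ (n + 1) * ((1 - p) ^ k * (1 - p) ^ (n - k)) := by
        gcongr
        · exact pow_nonneg (by linarith) _
        · linarith
    _ = p ^ (n + 1) * (1 - p) ^ n := by rw [← pow_add, Nat.add_sub_cancel' (by omega)]

lemma sum_Icc_choose_le (n : ℕ) :
    ∑ i ∈ Icc (n + 1) (2 * n + 1), ((2 * n + 1).choose i : ℝ) ≤ 2 ^ (2 * n + 1) := by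
  calc ∑ i ∈ Icc (n + 1) (2 * n + 1), ((2 * n + 1).choose i : ℝ)
      ≤ ∑ i ∈ range (2 * n + 1 + 1), ((2 * n + 1).choose i : ℝ) :=
        sum_le_sum_of_subset_of_nonneg (fun i hi => by simp only [mem_Icc, mem_range] at *; omega)
          fun _ _ _ => by positivity
    _ = 2 ^ (2 * n + 1) := by exact_mod_cast Nat.sum_range_choose (2 * n + 1)

lemma majorityError_le {p : ℝ} (hp0 : 0 ≤ p) (hp : p ≤ 1 / 2) (n : ℕ) :
    majorityError p n ≤ 2 * p * (4 * p * (1 - p)) ^ n := by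
  calc majorityError p n
      ≤ ∑ i ∈ Icc (n + 1) (2 * n + 1), ((2 * n + 1).choose i : ℝ) * (p ^ (n + 1) * (1 - p) ^ n) := by
        refine sum_le_sum fun i hi => ?_
        rw [mem_Icc] at hi
        rw [mul_assoc]
        exact mul_le_mul_of_nonneg_left (pow_mul_one_sub_pow_le_of_le_half hp0 hp hi.1 hi.2)
          (by positivity)
    _ ≤ 2 ^ (2 * n + 1) * (p ^ (n + 1) * (1 - p) ^ n) := by
        rw [← sum_mul]
        have : 0 ≤ 1 - p := by linarith
        gcongr
        exact sum_Icc_choose_le n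
    _ = 2 * p * (4 * p * (1 - p)) ^ n := by
        rw [pow_succ, pow_mul, mul_pow, mul_pow]; ring

lemma majorityError_one_sub (p : ℝ) (n : ℕ) :
    majorityError (1 - p) n =
      ∑ i ∈ range (n + 1), ((2 * n + 1).choose i : ℝ) * p ^ i * (1 - p) ^ (2 * n + 1 - i) := by
  rw [majorityError, sub_sub_cancel]
  refine sum_nbij' (fun i => 2 * n + 1 - i) (fun i => 2 * n + 1 - i) ?_ ?_ ?_ ?_ ?_
  · intro i hi
    simp only [mem_Icc, mem_range] at hi ⊢
    omega
  · intro i hi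
    simp only [mem_Icc, mem_range] at hi ⊢
    omega
  · intro i hi
    simp only [mem_Icc] at hi
    omega
  · intro i hi
    simp only [mem_range] at hi
    omega
  · intro i hi
    simp only [mem_Icc] at hi
    rw [← Nat.choose_symm hi.2, Nat.sub_sub_self hi.2]
    ring

lemma majorityError_add_majorityError_one_sub (p : ℝ) (n : ℕ) :
    majorityError p n + majorityError (1 - p) n = 1 := by
  have hsplit := sum_range_add_sum_Ico
    (fun i => ((2 * n + 1).choose i : ℝ) * p ^ i * (1 - p) ^ (2 * n + 1 - i))
    (show n + 1 ≤ 2 * n + 1 + 1 by omega)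
  have hbinom : ∑ i ∈ range (2 * n + 1 + 1),
      ((2 * n + 1).choose i : ℝ) * p ^ i * (1 - p) ^ (2 * n + 1 - i) = 1 := by
    have h := (add_pow p (1 - p) (2 * n + 1)).symm
    rw [add_sub_cancel, one_pow] at h
    exact (sum_congr rfl fun i _ => by ring).trans h
  rw [majorityError_one_sub, majorityError, ← Ico_add_one_right_eq_Icc]
  linarith

lemma tendsto_majorityError_zero {p : ℝ} (hp0 : 0 ≤ p) (hp : p < 1 / 2) :
    Tendsto (majorityError p) atTop (nhds 0) := by
  have hr : 4 * p * (1 - p) < 1 := by nlinarith [sq_nonneg (1 - 2 * p)]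
  have hgeom : Tendsto (fun n : ℕ => 2 * p * (4 * p * (1 - p)) ^ n) atTop (nhds 0) := by
    simpa using (tendsto_pow_atTop_nhds_zero_of_lt_one (by nlinarith) hr).const_mul (2 * p)
  exact squeeze_zero (majorityError_nonneg hp0 (by linarith)) (majorityError_le hp0 hp.le) hgeom

lemma tendsto_majorityError_one {p : ℝ} (hp : 1 / 2 < p) (hp1 : p ≤ 1) :
    Tendsto (majorityError p) atTop (nhds 1) := by
  have hdual := tendsto_majorityError_zero (p := 1 - p) (by linarith) (by linarith)
  have h := (tendsto_const_nhds (x := (1 : ℝ))).sub hdual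
  rw [sub_zero] at h
  exact h.congr fun n => by linarith [majorityError_add_majorityError_one_sub p n]

/-- asymptotics of the multi-sensor loss, Section IV-B: for `θ ∈ (0,1/2)`,
`θ̂ = θ/(1-θ)` and odd `K = 2n+1`, let
`L^K_∞(θ) = ∑_{i=n+1}^{K} C(K,i) θ^i (1-θ)^{K-i} - (1/2) ∑_{i=n+1}^{K} C(K,i) θ̂^i (1-θ̂)^{K-i}`.
As `K → ∞` through odd values, `L^K_∞(θ) → 0` if `θ < 1/3` and `L^K_∞(θ) → -1/2` if
`1/3 < θ < 1/2`. -/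
theorem multi_sensor_loss_asymptotics (θ : ℝ) (hθ : θ ∈ Set.Ioo (0:ℝ) (1/2)) :
    (θ < 1/3 → Filter.Tendsto (fun n : ℕ =>
        (∑ i ∈ Finset.Icc (n + 1) (2 * n + 1),
            ((2 * n + 1).choose i : ℝ) * θ ^ i * (1 - θ) ^ (2 * n + 1 - i)) -
          (1/2) * ∑ i ∈ Finset.Icc (n + 1) (2 * n + 1),
            ((2 * n + 1).choose i : ℝ) * (θ / (1 - θ)) ^ i *
              (1 - θ / (1 - θ)) ^ (2 * n + 1 - i))
        Filter.atTop (nhds 0)) ∧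
    (1/3 < θ → Filter.Tendsto (fun n : ℕ =>
        (∑ i ∈ Finset.Icc (n + 1) (2 * n + 1),
            ((2 * n + 1).choose i : ℝ) * θ ^ i * (1 - θ) ^ (2 * n + 1 - i)) -
          (1/2) * ∑ i ∈ Finset.Icc (n + 1) (2 * n + 1),
            ((2 * n + 1).choose i : ℝ) * (θ / (1 - θ)) ^ i *
              (1 - θ / (1 - θ)) ^ (2 * n + 1 - i))
        Filter.atTop (nhds (-(1/2)))) := by
  obtain ⟨hθ0, hθ2⟩ := hθ
  have h1θ : 0 < 1 - θ := by linarith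
  have hrobust := tendsto_majorityError_zero hθ0.le hθ2
  have hhat0 : 0 ≤ θ / (1 - θ) := (div_pos hθ0 h1θ).le
  constructor
  · intro h13
    have hhat := tendsto_majorityError_zero hhat0 (by rw [div_lt_iff₀ h1θ]; linarith)
    have h := hrobust.sub (hhat.const_mul (1 / 2))
    rwa [mul_zero, sub_zero] at h
  · intro h13
    have hhat := tendsto_majorityError_one (p := θ / (1 - θ)) (by rw [lt_div_iff₀ h1θ]; linarith)
      (by rw [div_le_one h1θ]; linarith)
    have h := hrobust.sub (hhat.const_mul (1 / 2))
    rwa [mul_one, zero_sub] at h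
end
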